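/- Let a > 0, b > 0, and c* > 0. Let u : ℝ^N × [0,∞) → ℝ be continuous, nonnegative, and bounded (sup_{x,t} u(x,t) < ∞), and define v(x,t) = ∫₀^∞ e^{−s} ∫_{ℝ^N} G(x−y, s) u(y,t) dy ds. If for every c with 0 ≤ c < c* one has lim_{t→∞} sup_{|x| ≤ ct} |u(x,t) − a/b| = 0, then for every c with 0 ≤ c < c* one also has lim_{t→∞} sup_{|x| ≤ ct} |v(x,t) − a/b| = 0. -/

import Mathlib

open MeasureTheory Real Set Filter
open scoped ENNReal

noncomputable section

/-- Euclidean space `ℝ^N`. -/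
abbrev Spc (N : ℕ) := EuclideanSpace ℝ (Fin N)

/-- Partial derivative of `f` in the `i`-th coordinate direction. -/
noncomputable def pdir {N : ℕ} (f : Spc N → ℝ) (i : Fin N) (x : Spc N) : ℝ :=
  fderiv ℝ f x (EuclideanSpace.single i 1)

/-- Laplacian `Δf = ∑ i ∂²f/∂xᵢ²`. -/
noncomputable def lapl {N : ℕ} (f : Spc N → ℝ) (x : Spc N) : ℝ :=
  ∑ i, pdir (pdir f i) i x

/-- The chemotaxis term `∇·(u ∇v) = ∑ i ∂ᵢ (u ∂ᵢ v)`. -/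
noncomputable def divg {N : ℕ} (u v : Spc N → ℝ) (x : Spc N) : ℝ :=
  ∑ i, pdir (fun y => u y * pdir v i y) i x

/-- Membership in `C_unif^b(ℝ^N)`: bounded and uniformly continuous. -/
def CunifB {N : ℕ} (f : Spc N → ℝ) : Prop :=
  UniformContinuous f ∧ ∃ M, ∀ x, |f x| ≤ M

/-- `t ∈ [0, T)` for an extended-real final time `T`. -/
def InT (t : ℝ) (T : ℝ≥0∞) : Prop := 0 ≤ t ∧ ENNReal.ofReal t < T

/-- Classical solution of (KS) on `ℝ^N × [0,T)`:  `u, v` continuous on `ℝ^N × [0,T)`,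
twice continuously differentiable in `x` and once differentiable in `t` on `ℝ^N × (0,T)`,
satisfying `u_t = Δu - χ ∇·(u∇v) + u(a - bu)` and `0 = Δv + u - v` pointwise there,
with `v(·,t)` bounded for each `t`. -/
structure IsClassicalKS (N : ℕ) (χ a b : ℝ) (T : ℝ≥0∞)
    (u v : Spc N → ℝ → ℝ) : Prop where
  contu : ContinuousOn (fun q : Spc N × ℝ => u q.1 q.2) {q | InT q.2 T}
  contv : ContinuousOn (fun q : Spc N × ℝ => v q.1 q.2) {q | InT q.2 T}
  cdu : ∀ t : ℝ, 0 < t → ENNReal.ofReal t < T → ContDiff ℝ 2 fun x => u x t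
  cdv : ∀ t : ℝ, 0 < t → ENNReal.ofReal t < T → ContDiff ℝ 2 fun x => v x t
  difft : ∀ x, ∀ t : ℝ, 0 < t → ENNReal.ofReal t < T → DifferentiableAt ℝ (u x) t
  equ : ∀ x, ∀ t : ℝ, 0 < t → ENNReal.ofReal t < T →
    deriv (u x) t =
      lapl (fun y => u y t) x - χ * divg (fun y => u y t) (fun y => v y t) x
        + u x t * (a - b * u x t)
  eqv : ∀ x, ∀ t : ℝ, 0 < t → ENNReal.ofReal t < T →
    0 = lapl (fun y => v y t) x + u x t - v x t
  vbdd : ∀ t : ℝ, InT t T → ∃ M, ∀ x, |v x t| ≤ M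

/-- Classical solution of (KS) on `ℝ^N × (0,T)` (no regularity required at `t = 0`). -/
structure IsClassicalKSOpen (N : ℕ) (χ a b : ℝ) (T : ℝ≥0∞)
    (u v : Spc N → ℝ → ℝ) : Prop where
  cdu : ∀ t : ℝ, 0 < t → ENNReal.ofReal t < T → ContDiff ℝ 2 fun x => u x t
  cdv : ∀ t : ℝ, 0 < t → ENNReal.ofReal t < T → ContDiff ℝ 2 fun x => v x t
  difft : ∀ x, ∀ t : ℝ, 0 < t → ENNReal.ofReal t < T → DifferentiableAt ℝ (u x) t
  equ : ∀ x, ∀ t : ℝ, 0 < t → ENNReal.ofReal t < T →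
    deriv (u x) t =
      lapl (fun y => u y t) x - χ * divg (fun y => u y t) (fun y => v y t) x
        + u x t * (a - b * u x t)
  eqv : ∀ x, ∀ t : ℝ, 0 < t → ENNReal.ofReal t < T →
    0 = lapl (fun y => v y t) x + u x t - v x t
  vbdd : ∀ t : ℝ, 0 < t → ENNReal.ofReal t < T → ∃ M, ∀ x, |v x t| ≤ M

/-- Nonnegativity of a solution pair on `ℝ^N × [0,T)`. -/
def NonnegOn {N : ℕ} (u v : Spc N → ℝ → ℝ) (T : ℝ≥0∞) : Prop :=
  ∀ x, ∀ t : ℝ, InT t T → 0 ≤ u x t ∧ 0 ≤ v x t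

/-- Nonnegativity of a solution pair on `ℝ^N × (0,T)`. -/
def NonnegOnOpen {N : ℕ} (u v : Spc N → ℝ → ℝ) (T : ℝ≥0∞) : Prop :=
  ∀ x, ∀ t : ℝ, 0 < t → ENNReal.ofReal t < T → 0 ≤ u x t ∧ 0 ≤ v x t

/-- Continuity of `t ↦ u(·,t)` from `[0,T)` into `C_unif^b(ℝ^N)` with the sup-norm. -/
def SupContOn {N : ℕ} (u : Spc N → ℝ → ℝ) (T : ℝ≥0∞) : Prop :=
  (∀ t : ℝ, InT t T → CunifB fun x => u x t) ∧
  ∀ t₀ : ℝ, InT t₀ T → ∀ ε : ℝ, 0 < ε → ∃ δ > 0, ∀ t : ℝ, InT t T → |t - t₀| < δ →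
    ∀ x, |u x t - u x t₀| ≤ ε

/-- `t ↦ u(·,t)` takes values in `L^p`, is continuous from `[0,T)` into `L^p`,
and has value `u₀` at `t = 0` in the `L^p` sense. -/
def LpContOn {N : ℕ} (u : Spc N → ℝ → ℝ) (u₀ : Spc N → ℝ) (p T : ℝ≥0∞) : Prop :=
  (∀ t : ℝ, 0 < t → ENNReal.ofReal t < T → MemLp (fun x => u x t) p volume) ∧
  Tendsto (fun t => eLpNorm (fun x => u x t - u₀ x) p volume)
    (nhdsWithin 0 (Set.Ioi 0)) (nhds 0) ∧
  ∀ t₀ : ℝ, 0 < t₀ → ENNReal.ofReal t₀ < T →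
    Tendsto (fun t => eLpNorm (fun x => u x t - u x t₀) p volume)
      (nhdsWithin t₀ {t | 0 < t ∧ ENNReal.ofReal t < T}) (nhds 0)

/-- The heat kernel `G(x,t) = (4πt)^{-N/2} exp(-|x|²/(4t))`. -/
noncomputable def heatK (N : ℕ) (x : Spc N) (t : ℝ) : ℝ :=
  (4 * π * t) ^ (-(N : ℝ) / 2) * Real.exp (-‖x‖ ^ 2 / (4 * t))

/-- The resolvent `(I - Δ)⁻¹ u`, as the Laplace transform of the heat semigroup. -/
noncomputable def resolv {N : ℕ} (u : Spc N → ℝ) (x : Spc N) : ℝ :=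
  ∫ s in Set.Ioi (0 : ℝ), Real.exp (-s) * ∫ z, heatK N (x - z) s * u z

/-!
The kernel of `(I - Δ)⁻¹` is a probability density, so `v(x,t) - a/b` is an average of
`u(·,t) - a/b`. Split the average at radius `δt`, `δ = (c* - c)/2`: for `|x| ≤ ct` the ball
`B(x, δt)` lies in `{|z| ≤ (c + δ)t}`, where `u` is uniformly close to `a/b`; outside it
`|u - a/b|` is bounded while the kernel mass beyond radius `δt` tends to zero.
-/

section HeatKernel

variable {N : ℕ}

lemma heatK_nonneg (x : Spc N) {s : ℝ} (hs : 0 < s) : 0 ≤ heatK N x s := by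
  unfold heatK; positivity

lemma integral_heatK {s : ℝ} (hs : 0 < s) : ∫ y : Spc N, heatK N y s = 1 := by
  have hb : 0 < 1 / (4 * s) := by positivity
  have gauss := GaussianFourier.integral_rexp_neg_mul_sq_norm (V := Spc N) hb
  rw [finrank_euclideanSpace_fin, show π / (1 / (4 * s)) = 4 * π * s by field_simp] at gauss
  have hexp : ∀ y : Spc N, -‖y‖ ^ 2 / (4 * s) = -(1 / (4 * s)) * ‖y‖ ^ 2 := fun y => by ring
  simp only [heatK, hexp, integral_const_mul, gauss]
  rw [← Real.rpow_add (by positivity), neg_div, neg_add_cancel, Real.rpow_zero]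

lemma integrable_heatK {s : ℝ} (hs : 0 < s) : Integrable fun y : Spc N => heatK N y s :=
  .of_integral_ne_zero (by rw [integral_heatK hs]; exact one_ne_zero)

lemma measurable_heatK_uncurry : Measurable fun p : Spc N × ℝ => heatK N p.1 p.2 := by
  unfold heatK; fun_prop

end HeatKernel

lemma abs_integral_mul_sub_le {α : Type*} [MeasurableSpace α] {μ : Measure α}
    {k g h : α → ℝ} {L : ℝ} (hk : ∀ a, 0 ≤ k a) (hk_int : Integrable k μ)
    (hk_one : ∫ a, k a ∂μ = 1) (hkg : Integrable (fun a => k a * g a) μ)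
    (hkh : Integrable (fun a => k a * h a) μ) (hgh : ∀ᵐ a ∂μ, |g a - L| ≤ h a) :
    |∫ a, k a * g a ∂μ - L| ≤ ∫ a, k a * h a ∂μ := by
  have hkL : Integrable (fun a => k a * (g a - L)) μ := by
    simp_rw [mul_sub]; exact hkg.sub (hk_int.mul_const L)
  have hcentre : ∫ a, k a * g a ∂μ - L = ∫ a, k a * (g a - L) ∂μ := by
    simp only [mul_sub]
    rw [integral_sub hkg (hk_int.mul_const L), integral_mul_const, hk_one, one_mul]
  rw [hcentre, ← Real.norm_eq_abs]
  refine (norm_integral_le_integral_norm _).trans (integral_mono_ae hkL.norm hkh ?_)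
  filter_upwards [hgh] with a ha
  rw [norm_mul, Real.norm_of_nonneg (hk a), Real.norm_eq_abs]
  exact mul_le_mul_of_nonneg_left ha (hk a)

section HeatTail

variable {N : ℕ}

def heatTail (N : ℕ) (R s : ℝ) : ℝ := ∫ y in {y : Spc N | R ≤ ‖y‖}, heatK N y s

lemma measurableSet_le_norm (R : ℝ) : MeasurableSet {y : Spc N | R ≤ ‖y‖} :=
  measurableSet_le measurable_const measurable_norm

lemma heatTail_nonneg (R : ℝ) {s : ℝ} (hs : 0 < s) : 0 ≤ heatTail N R s :=
  setIntegral_nonneg (measurableSet_le_norm R) fun y _ => heatK_nonneg y hs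

lemma heatTail_le_one (R : ℝ) {s : ℝ} (hs : 0 < s) : heatTail N R s ≤ 1 := by
  rw [← integral_heatK (N := N) hs]
  exact setIntegral_le_integral (integrable_heatK hs) (.of_forall fun y => heatK_nonneg y hs)

lemma measurable_heatTail (R : ℝ) : Measurable (heatTail N R) :=
  (measurable_heatK_uncurry.comp measurable_swap).stronglyMeasurable.integral_prod_right'
    (ν := volume.restrict {y : Spc N | R ≤ ‖y‖}) |>.measurable

lemma tendsto_heatTail_atTop {s : ℝ} (hs : 0 < s) :
    Tendsto (fun R => heatTail N R s) atTop (nhds 0) := by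
  have hanti : Antitone fun R : ℝ => {y : Spc N | R ≤ ‖y‖} :=
    fun R R' hR y hy => le_trans hR hy
  have hempty : ⋂ R : ℝ, {y : Spc N | R ≤ ‖y‖} = ∅ :=
    eq_empty_of_forall_notMem fun y hy => by
      have := mem_iInter.mp hy (‖y‖ + 1)
      simp only [mem_ofPred_eq] at this
      linarith
  simpa [heatTail, hempty] using tendsto_setIntegral_of_antitone measurableSet_le_norm hanti
    ⟨0, (integrable_heatK hs).integrableOn⟩

end HeatTail

section ResolventTail

variable {N : ℕ}

/-- By Fubini, the mass outside the ball of radius `R` of the kernel `∫₀^∞ e^{-s} G(·,s) ds`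
of `(I - Δ)⁻¹`. -/
def resolvTail (N : ℕ) (R : ℝ) : ℝ := ∫ s in Ioi 0, rexp (-s) * heatTail N R s

lemma norm_exp_neg_mul_heatTail_le (R : ℝ) {s : ℝ} (hs : 0 < s) :
    ‖rexp (-s) * heatTail N R s‖ ≤ rexp (-s) := by
  rw [norm_mul, Real.norm_of_nonneg (exp_nonneg _),
    Real.norm_of_nonneg (heatTail_nonneg R hs)]
  exact mul_le_of_le_one_right (exp_nonneg _) (heatTail_le_one R hs)

lemma tendsto_resolvTail_atTop : Tendsto (resolvTail N) atTop (nhds 0) := by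
  have hlim := tendsto_integral_filter_of_dominated_convergence (l := atTop)
    (μ := volume.restrict (Ioi (0 : ℝ))) (F := fun R s => rexp (-s) * heatTail N R s)
    (f := fun _ => 0) (fun s => rexp (-s))
    (.of_forall fun R => (measurable_neg.exp.mul (measurable_heatTail R)).aestronglyMeasurable)
    (.of_forall fun R => (ae_restrict_iff' measurableSet_Ioi).mpr
      (.of_forall fun s hs => norm_exp_neg_mul_heatTail_le R hs))
    (integrableOn_exp_neg_Ioi 0)
    ((ae_restrict_iff' measurableSet_Ioi).mpr (.of_forall fun s hs => by
      simpa using (tendsto_heatTail_atTop (N := N) hs).const_mul (rexp (-s))))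
  rwa [integral_zero] at hlim

end ResolventTail

section ResolventEstimate

variable {N : ℕ} {f : Spc N → ℝ} {L K ε R : ℝ} {x : Spc N}

lemma abs_integral_heatK_mul_sub_le (hf : Measurable f) (hK : ∀ z, |f z - L| ≤ K) (hε : 0 ≤ ε)
    (hnear : ∀ z, ‖x - z‖ < R → |f z - L| ≤ ε) {s : ℝ} (hs : 0 < s) :
    |(∫ z, heatK N (x - z) s * f z) - L| ≤ ε + K * heatTail N R s := by
  set S := {y : Spc N | R ≤ ‖y‖}
  have hk_int : Integrable fun z => heatK N (x - z) s := (integrable_heatK hs).comp_sub_left x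
  have htail_int : Integrable fun z => S.indicator (fun y => heatK N y s) (x - z) :=
    ((integrable_heatK hs).indicator (measurableSet_le_norm R)).comp_sub_left x
  have hsplit : ∀ z, heatK N (x - z) s * (ε + K * S.indicator 1 (x - z)) =
      ε * heatK N (x - z) s + K * S.indicator (fun y => heatK N y s) (x - z) := by
    intro z
    by_cases hz : x - z ∈ S
    · simp only [hz, indicator_of_mem, Pi.one_apply, mul_one]; ring
    · simp only [hz, not_false_eq_true, indicator_of_notMem, mul_zero, add_zero]; ring
  have hpointwise : ∀ z, |f z - L| ≤ ε + K * S.indicator 1 (x - z) := by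
    intro z
    by_cases hz : x - z ∈ S
    · simpa [hz] using (hK z).trans (le_add_of_nonneg_left hε)
    · simpa [hz] using hnear z (not_le.mp hz)
  have hbound := abs_integral_mul_sub_le (fun z => heatK_nonneg (x - z) hs) hk_int
    (by rw [integral_sub_left_eq_self (fun y => heatK N y s)]; exact integral_heatK hs)
    (hk_int.mul_bdd (c := K + |L|) hf.aestronglyMeasurable (.of_forall fun z => by
      rw [Real.norm_eq_abs]; linarith [abs_sub_abs_le_abs_sub (f z) L, hK z]))
    (by simp_rw [hsplit]; exact (hk_int.const_mul ε).add (htail_int.const_mul K))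
    (.of_forall hpointwise)
  simp_rw [hsplit] at hbound
  rw [integral_add (hk_int.const_mul ε) (htail_int.const_mul K), integral_const_mul,
    integral_const_mul, integral_sub_left_eq_self (fun y => heatK N y s) volume x,
    integral_heatK hs, mul_one, integral_sub_left_eq_self (S.indicator fun y => heatK N y s),
    integral_indicator (measurableSet_le_norm R)] at hbound
  exact hbound

lemma abs_resolv_sub_le (hf : Measurable f) (hK : ∀ z, |f z - L| ≤ K) (hε : 0 ≤ ε)
    (hnear : ∀ z, ‖x - z‖ < R → |f z - L| ≤ ε) :
    |resolv f x - L| ≤ ε + K * resolvTail N R := by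
  set I : ℝ → ℝ := fun s => ∫ z, heatK N (x - z) s * f z
  have hK0 : 0 ≤ K := (abs_nonneg _).trans (hK 0)
  have hexp_int := integrableOn_exp_neg_Ioi 0
  have hI_meas : AEStronglyMeasurable I (volume.restrict (Ioi 0)) := by
    have : Measurable fun p : ℝ × Spc N => heatK N (x - p.2) p.1 * f p.2 :=
      (measurable_heatK_uncurry.comp
        ((measurable_const.sub measurable_snd).prodMk measurable_fst)).mul (hf.comp measurable_snd)
    exact this.stronglyMeasurable.integral_prod_right'.aestronglyMeasurable
  have hI : ∀ s ∈ Ioi (0 : ℝ), |I s - L| ≤ ε + K * heatTail N R s :=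
    fun s hs => abs_integral_heatK_mul_sub_le hf hK hε hnear hs
  have hI_bdd : ∀ s ∈ Ioi (0 : ℝ), ‖I s‖ ≤ ε + K + |L| := fun s hs => by
    have := mul_le_of_le_one_right hK0 (heatTail_le_one (N := N) R hs)
    rw [Real.norm_eq_abs]
    linarith [abs_sub_abs_le_abs_sub (I s) L, hI s hs]
  have htail_int : IntegrableOn (fun s => rexp (-s) * heatTail N R s) (Ioi 0) :=
    hexp_int.mul_bdd (measurable_heatTail R).aestronglyMeasurable
      ((ae_restrict_iff' measurableSet_Ioi).mpr (.of_forall fun s hs => by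
        rw [Real.norm_of_nonneg (heatTail_nonneg R hs)]; exact heatTail_le_one R hs))
  have hsplit : ∀ s, rexp (-s) * (ε + K * heatTail N R s) =
      rexp (-s) * ε + K * (rexp (-s) * heatTail N R s) := fun s => by ring
  have hbound := abs_integral_mul_sub_le (fun s => exp_nonneg (-s)) hexp_int
    (by simpa using integral_exp_neg_Ioi (0 : ℝ))
    (hexp_int.mul_bdd hI_meas ((ae_restrict_iff' measurableSet_Ioi).mpr (.of_forall hI_bdd)))
    (by simp_rw [hsplit]; exact (hexp_int.mul_const ε).add (htail_int.const_mul K))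
    ((ae_restrict_iff' measurableSet_Ioi).mpr (.of_forall hI))
  simp_rw [hsplit] at hbound
  rw [integral_add (hexp_int.mul_const ε) (htail_int.const_mul K), integral_mul_const,
    integral_const_mul, show ∫ s in Ioi (0 : ℝ), rexp (-s) = 1 by
      simpa using integral_exp_neg_Ioi (0 : ℝ), one_mul] at hbound
  exact hbound

end ResolventEstimate

theorem resolvent_inherits_inner_spreading_general
    (N : ℕ) (a b cstar : ℝ)
    (u : Spc N → ℝ → ℝ)
    (hcont : ContinuousOn (fun q : Spc N × ℝ => u q.1 q.2) {q | 0 ≤ q.2})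
    (hnn : ∀ x, ∀ t : ℝ, 0 ≤ t → 0 ≤ u x t)
    (hbdd : ∃ M, ∀ x, ∀ t : ℝ, 0 ≤ t → u x t ≤ M)
    (hyp : ∀ c : ℝ, 0 ≤ c → c < cstar → ∀ ε : ℝ, 0 < ε →
      ∃ T : ℝ, ∀ t : ℝ, T ≤ t → ∀ x : Spc N, ‖x‖ ≤ c * t → |u x t - a / b| < ε) :
    ∀ c : ℝ, 0 ≤ c → c < cstar → ∀ ε : ℝ, 0 < ε →
      ∃ T : ℝ, ∀ t : ℝ, T ≤ t → ∀ x : Spc N, ‖x‖ ≤ c * t →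
        |resolv (fun y => u y t) x - a / b| < ε := by
  intro c hc0 hc ε hε
  obtain ⟨M, hM⟩ := hbdd
  set K := |M| + |a / b|
  have hK : ∀ t, 0 ≤ t → ∀ z, |u z t - a / b| ≤ K := fun t ht z =>
    abs_le.mpr ⟨by linarith [hnn z t ht, le_abs_self (a / b), abs_nonneg M],
      by linarith [hM z t ht, le_abs_self M, neg_abs_le (a / b)]⟩
  have hmeas : ∀ t, 0 ≤ t → Measurable fun z => u z t := fun t ht =>
    (hcont.comp_continuous (continuous_id.prodMk continuous_const) fun _ => ht).measurable
  set δ := (cstar - c) / 2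
  have hδ : 0 < δ := by simp only [δ]; linarith
  obtain ⟨T, hT⟩ := hyp (c + δ) (by linarith) (by simp only [δ]; linarith) (ε / 2) (half_pos hε)
  obtain ⟨R, hR⟩ := eventually_atTop.mp <|
    (tendsto_resolvTail_atTop (N := N)).const_mul K |>.eventually_lt_const
      (show K * 0 < ε / 2 by simpa using hε)
  refine ⟨max T (max (R / δ) 0), fun t ht x hx => ?_⟩
  obtain ⟨hTt, hRt, ht0⟩ : T ≤ t ∧ R / δ ≤ t ∧ 0 ≤ t := by simpa only [max_le_iff] using ht
  rw [div_le_iff₀ hδ, mul_comm] at hRt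
  have hnear : ∀ z, ‖x - z‖ < δ * t → |u z t - a / b| ≤ ε / 2 := fun z hz =>
    (hT t hTt z (by linarith [norm_le_norm_add_norm_sub' z x, norm_sub_rev x z])).le
  calc |resolv (fun y => u y t) x - a / b|
      ≤ ε / 2 + K * resolvTail N (δ * t) :=
        abs_resolv_sub_le (hmeas t ht0) (hK t ht0) (half_pos hε).le hnear
    _ < ε := by linarith [hR _ hRt]

/-- Lemma 5.5 (i): if `u` is continuous, nonnegative and bounded on
`ℝ^N × [0,∞)` and `u(x,t) → a/b` uniformly on `{|x| ≤ ct}` for every `0 ≤ c < c*`, then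
the resolvent `v(·,t) = (I-Δ)⁻¹ u(·,t)` satisfies the same convergence. -/
theorem resolvent_inherits_inner_spreading
    (N : ℕ) (hN : 1 ≤ N) (a b cstar : ℝ) (ha : 0 < a) (hb : 0 < b) (hc : 0 < cstar)
    (u : Spc N → ℝ → ℝ)
    (hcont : ContinuousOn (fun q : Spc N × ℝ => u q.1 q.2) {q | 0 ≤ q.2})
    (hnn : ∀ x, ∀ t : ℝ, 0 ≤ t → 0 ≤ u x t)
    (hbdd : ∃ M, ∀ x, ∀ t : ℝ, 0 ≤ t → u x t ≤ M)
    (hyp : ∀ c : ℝ, 0 ≤ c → c < cstar → ∀ ε : ℝ, 0 < ε →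
      ∃ T : ℝ, ∀ t : ℝ, T ≤ t → ∀ x : Spc N, ‖x‖ ≤ c * t → |u x t - a / b| < ε) :
    ∀ c : ℝ, 0 ≤ c → c < cstar → ∀ ε : ℝ, 0 < ε →
      ∃ T : ℝ, ∀ t : ℝ, T ≤ t → ∀ x : Spc N, ‖x‖ ≤ c * t →
        |resolv (fun y => u y t) x - a / b| < ε :=
  resolvent_inherits_inner_spreading_general N a b cstar u hcont hnn hbdd hyp
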